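/- Under up-to-propositional-equivalence state identification, the forward search space for LTLf synthesis is doubly exponentially bounded: for an LTLf formula φ, every state formula ψ reachable from φ by repeated progression satisfies that xnf(ψ)^p is a Boolean function over at most |cl(φ)| variables, hence the number of reachable states distinct up to propositional equivalence is at most 2^(2^|cl(φ)|). -/

import Mathlib

/-!
Progression never creates new propositional variables: progressing a temporal formula only
yields its immediate subformulas, their progressions, the formula itself and `◇true` or
`□false`. Hence every reachable state is a positive Boolean combination of formulas in `cl φ`,
and its class up to propositional equivalence is determined by its truth table over `cl φ`,
an element of `𝒫 (𝒫 (cl φ))`.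
-/

namespace LTLfSynth

open scoped Classical

/-- LTLf formulas in negation normal form. -/
inductive LTLf (P : Type*) where
  | tt : LTLf P
  | ff : LTLf P
  | atom : P → LTLf P
  | natom : P → LTLf P
  | and : LTLf P → LTLf P → LTLf P
  | or : LTLf P → LTLf P → LTLf P
  | next : LTLf P → LTLf P
  | wnext : LTLf P → LTLf P
  | until_ : LTLf P → LTLf P → LTLf P
  | release : LTLf P → LTLf P → LTLf P

variable {P : Type*}

/-- ◇true -/
def diamondTrue : LTLf P := .until_ .tt .tt

/-- □false -/
def boxFalse : LTLf P := .release .ff .ff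

/-- Finite-trace satisfaction `ρ, i ⊨ φ`, where position `ρ.length` (and beyond)
corresponds to the empty suffix (empty-trace semantics). -/
def Sat (ρ : List (Set P)) : LTLf P → ℕ → Prop
  | .tt, _ => True
  | .ff, _ => False
  | .atom p, i => i < ρ.length ∧ p ∈ ρ.getD i ∅
  | .natom p, i => i < ρ.length ∧ p ∉ ρ.getD i ∅
  | .and φ ψ, i => Sat ρ φ i ∧ Sat ρ ψ i
  | .or φ ψ, i => Sat ρ φ i ∨ Sat ρ ψ i
  | .next φ, i => i + 1 < ρ.length ∧ Sat ρ φ (i + 1)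
  | .wnext φ, i => i + 1 < ρ.length → Sat ρ φ (i + 1)
  | .until_ φ ψ, i =>
      ∃ j, i ≤ j ∧ j < ρ.length ∧ Sat ρ ψ j ∧ ∀ k, i ≤ k → k < j → Sat ρ φ k
  | .release φ ψ, i =>
      ∀ j, i ≤ j → j < ρ.length → (Sat ρ ψ j ∨ ∃ k, i ≤ k ∧ k < j ∧ Sat ρ φ k)

/-- Single-step formula progression `fp σ φ = fp(φ, σ)`. -/
noncomputable def fp (σ : Set P) : LTLf P → LTLf P
  | .tt => .tt
  | .ff => .ff
  | .atom p => if p ∈ σ then .tt else .ff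
  | .natom p => if p ∈ σ then .ff else .tt
  | .and φ ψ => .and (fp σ φ) (fp σ ψ)
  | .or φ ψ => .or (fp σ φ) (fp σ ψ)
  | .next φ => .and φ diamondTrue
  | .wnext φ => .or φ boxFalse
  | .until_ .tt .tt => .tt
  | .until_ φ ψ => .or (fp σ ψ) (.and (fp σ φ) (.and (.until_ φ ψ) diamondTrue))
  | .release .ff .ff => .ff
  | .release φ ψ => .and (fp σ ψ) (.or (fp σ φ) (.or (.release φ ψ) boxFalse))

/-- Progression extended to finite traces: `fpTrace φ ε = φ`, `fpTrace φ (σu) = fpTrace (fp σ φ) u`. -/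
noncomputable def fpTrace : LTLf P → List (Set P) → LTLf P
  | φ, [] => φ
  | φ, σ :: u => fpTrace (fp σ φ) u

/-- Subformulas of a formula (including the formula itself). -/
def subf : LTLf P → Set (LTLf P)
  | .and φ ψ => insert (.and φ ψ) (subf φ ∪ subf ψ)
  | .or φ ψ => insert (.or φ ψ) (subf φ ∪ subf ψ)
  | .next φ => insert (.next φ) (subf φ)
  | .wnext φ => insert (.wnext φ) (subf φ)
  | .until_ φ ψ => insert (.until_ φ ψ) (subf φ ∪ subf ψ)
  | .release φ ψ => insert (.release φ ψ) (subf φ ∪ subf ψ)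
  | φ => {φ}

/-- The closure of `φ`: subformulas of `φ`, enriched with `◇true`, `□false`, `true`, `false`. -/
def cl (φ : LTLf P) : Set (LTLf P) :=
  subf φ ∪ subf diamondTrue ∪ subf boxFalse ∪ {LTLf.tt, LTLf.ff}

/-- Propositional evaluation of a formula, treating its propositional atoms
(literals and temporal subformulas) as opaque propositional variables valued by `v`. -/
def PropEval (v : LTLf P → Prop) : LTLf P → Prop
  | .tt => True
  | .ff => False
  | .and φ ψ => PropEval v φ ∧ PropEval v ψ
  | .or φ ψ => PropEval v φ ∨ PropEval v ψ
  | φ => v φ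

/-- Propositional equivalence `φ ∼p ψ`. -/
def PropEquiv (φ ψ : LTLf P) : Prop :=
  ∀ v : LTLf P → Prop, PropEval v φ ↔ PropEval v ψ

def atoms : LTLf P → Set (LTLf P)
  | .tt => ∅
  | .ff => ∅
  | .and φ ψ => atoms φ ∪ atoms ψ
  | .or φ ψ => atoms φ ∪ atoms ψ
  | χ => {χ}

theorem propEval_congr {v w : LTLf P → Prop} {χ : LTLf P} (h : ∀ a ∈ atoms χ, v a ↔ w a) :
    PropEval v χ ↔ PropEval w χ := by
  induction χ with
  | tt | ff => simp only [PropEval]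
  | and a b iha ihb | or a b iha ihb =>
      simp only [atoms, Set.mem_union] at h
      simp only [PropEval, iha fun x hx => h x (.inl hx), ihb fun x hx => h x (.inr hx)]
  | _ => exact h _ rfl

theorem PropEquiv.symm {χ ψ : LTLf P} (h : PropEquiv χ ψ) : PropEquiv ψ χ :=
  fun v => (h v).symm

theorem PropEquiv.trans {χ ψ θ : LTLf P} (h₁ : PropEquiv χ ψ) (h₂ : PropEquiv ψ θ) :
    PropEquiv χ θ := fun v => (h₁ v).trans (h₂ v)

theorem mem_subf_self (χ : LTLf P) : χ ∈ subf χ := by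
  cases χ <;> simp [subf]

theorem atoms_subset_subf (χ : LTLf P) : atoms χ ⊆ subf χ := by
  induction χ with
  | tt | ff => exact Set.empty_subset _
  | and a b iha ihb | or a b iha ihb =>
      exact (Set.union_subset_union iha ihb).trans (Set.subset_insert _ _)
  | _ => exact Set.singleton_subset_iff.mpr (mem_subf_self _)

theorem subf_subset_of_mem {χ a : LTLf P} (h : a ∈ subf χ) : subf a ⊆ subf χ := by
  induction χ with
  | and x y ihx ihy | or x y ihx ihy | until_ x y ihx ihy | release x y ihx ihy =>
      rcases h with rfl | h | h
      · exact subset_rfl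
      · exact (ihx h).trans (Set.subset_union_left.trans (Set.subset_insert _ _))
      · exact (ihy h).trans (Set.subset_union_right.trans (Set.subset_insert _ _))
  | next x ihx | wnext x ihx =>
      rcases h with rfl | h
      · exact subset_rfl
      · exact (ihx h).trans (Set.subset_insert _ _)
  | _ => rw [Set.mem_singleton_iff.mp h]

theorem subf_finite (χ : LTLf P) : (subf χ).Finite := by
  induction χ with
  | and _ _ iha ihb | or _ _ iha ihb | until_ _ _ iha ihb | release _ _ iha ihb =>
      exact (iha.union ihb).insert _
  | next _ ih | wnext _ ih => exact ih.insert _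
  | _ => exact Set.finite_singleton _

theorem cl_finite (φ : LTLf P) : (cl φ).Finite :=
  (((subf_finite φ).union (subf_finite _)).union (subf_finite _)).union (Set.toFinite _)

def SubfClosed (S : Set (LTLf P)) : Prop :=
  ∀ χ ∈ S, subf χ ⊆ S

theorem subfClosed_cl (φ : LTLf P) : SubfClosed (cl φ) := by
  rintro χ (((hχ | hχ) | hχ) | hχ)
  · exact (subf_subset_of_mem hχ).trans fun _ h => .inl (.inl (.inl h))
  · exact (subf_subset_of_mem hχ).trans fun _ h => .inl (.inl (.inr h))
  · exact (subf_subset_of_mem hχ).trans fun _ h => .inl (.inr h)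
  · rcases hχ with rfl | rfl <;> simp [subf, cl]

theorem SubfClosed.atoms_subset {S : Set (LTLf P)} (hS : SubfClosed S) {χ a : LTLf P}
    (hχ : χ ∈ S) (ha : a ∈ subf χ) : atoms a ⊆ S :=
  (atoms_subset_subf a).trans (hS a (hS χ hχ ha))

theorem fp_until_of_ne (σ : Set P) {a b : LTLf P} (h : ¬(a = .tt ∧ b = .tt)) :
    fp σ (.until_ a b) = .or (fp σ b) (.and (fp σ a) (.and (.until_ a b) diamondTrue)) := by
  cases a <;> cases b <;> simp_all [fp]

theorem fp_release_of_ne (σ : Set P) {a b : LTLf P} (h : ¬(a = .ff ∧ b = .ff)) :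
    fp σ (.release a b) = .and (fp σ b) (.or (fp σ a) (.or (.release a b) boxFalse)) := by
  cases a <;> cases b <;> simp_all [fp]

theorem atoms_diamondTrue : atoms (diamondTrue : LTLf P) = {diamondTrue} := rfl

theorem atoms_boxFalse : atoms (boxFalse : LTLf P) = {boxFalse} := rfl

theorem atoms_fp_subset {S : Set (LTLf P)} (hS : SubfClosed S) (hdt : diamondTrue ∈ S)
    (hbf : boxFalse ∈ S) (σ : Set P) {χ : LTLf P} (h : atoms χ ⊆ S) :
    atoms (fp σ χ) ⊆ S := by
  induction χ with
  | tt | ff => exact Set.empty_subset _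
  | atom p | natom p => unfold fp; split_ifs <;> exact Set.empty_subset _
  | and a b iha ihb | or a b iha ihb =>
      obtain ⟨ha, hb⟩ := Set.union_subset_iff.mp h
      exact Set.union_subset (iha ha) (ihb hb)
  | next a _ | wnext a _ =>
      have hχ := Set.singleton_subset_iff.mp h
      refine Set.union_subset (hS.atoms_subset hχ (by simp [subf, mem_subf_self])) ?_
      simp only [atoms_diamondTrue, atoms_boxFalse, Set.singleton_subset_iff]
      assumption
  | until_ a b iha ihb =>
      have hχ := Set.singleton_subset_iff.mp h
      by_cases hab : a = .tt ∧ b = .tt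
      · obtain ⟨rfl, rfl⟩ := hab
        exact Set.empty_subset _
      rw [fp_until_of_ne σ hab]
      simp only [atoms, atoms_diamondTrue, Set.union_subset_iff, Set.singleton_subset_iff]
      exact ⟨ihb (hS.atoms_subset hχ (by simp [subf, mem_subf_self])),
        iha (hS.atoms_subset hχ (by simp [subf, mem_subf_self])), hχ, hdt⟩
  | release a b iha ihb =>
      have hχ := Set.singleton_subset_iff.mp h
      by_cases hab : a = .ff ∧ b = .ff
      · obtain ⟨rfl, rfl⟩ := hab
        exact Set.empty_subset _
      rw [fp_release_of_ne σ hab]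
      simp only [atoms, atoms_boxFalse, Set.union_subset_iff, Set.singleton_subset_iff]
      exact ⟨ihb (hS.atoms_subset hχ (by simp [subf, mem_subf_self])),
        iha (hS.atoms_subset hχ (by simp [subf, mem_subf_self])), hχ, hbf⟩

theorem atoms_fpTrace_subset {S : Set (LTLf P)} (hS : SubfClosed S) (hdt : diamondTrue ∈ S)
    (hbf : boxFalse ∈ S) (u : List (Set P)) {χ : LTLf P} (h : atoms χ ⊆ S) :
    atoms (fpTrace χ u) ⊆ S := by
  induction u generalizing χ with
  | nil => exact h
  | cons σ u ih => exact ih (atoms_fp_subset hS hdt hbf σ h)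

theorem atoms_fpTrace_subset_cl (φ : LTLf P) (u : List (Set P)) : atoms (fpTrace φ u) ⊆ cl φ :=
  atoms_fpTrace_subset (subfClosed_cl φ) (by simp [cl, diamondTrue, subf])
    (by simp [cl, boxFalse, subf]) u ((atoms_subset_subf φ).trans fun _ h => .inl (.inl (.inl h)))

def propClass (χ : LTLf P) : Set (LTLf P) :=
  {ψ | PropEquiv χ ψ}

theorem propClass_eq_of_propEquiv {χ ψ : LTLf P} (h : PropEquiv χ ψ) :
    propClass χ = propClass ψ :=
  Set.ext fun _ => ⟨h.symm.trans, h.trans⟩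

def propClassesOn (A : Set (LTLf P)) : Set (Set (LTLf P)) :=
  {C | ∃ χ, atoms χ ⊆ A ∧ C = propClass χ}

/-- A valuation of the atoms in `A` is represented by the set of atoms it makes true. -/
def truthTable (A : Set (LTLf P)) (χ : LTLf P) : Set (Set (LTLf P)) :=
  {s ∈ 𝒫 A | PropEval (· ∈ s) χ}

theorem propEquiv_of_truthTable_eq {A : Set (LTLf P)} {χ ψ : LTLf P} (hχ : atoms χ ⊆ A)
    (hψ : atoms ψ ⊆ A) (h : truthTable A χ = truthTable A ψ) : PropEquiv χ ψ := by
  intro v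
  have mem_truthTable : ∀ θ, atoms θ ⊆ A → (PropEval v θ ↔ {a ∈ A | v a} ∈ truthTable A θ) :=
    fun θ hθ => (propEval_congr fun a ha => ⟨fun hv => ⟨hθ ha, hv⟩, And.right⟩).trans
      ⟨fun hθ => ⟨Set.sep_subset _ _, hθ⟩, And.right⟩
  rw [mem_truthTable χ hχ, mem_truthTable ψ hψ, h]

def classTable (A : Set (LTLf P)) (C : Set (LTLf P)) : Set (Set (LTLf P)) :=
  {s ∈ 𝒫 A | ∀ ψ ∈ C, PropEval (· ∈ s) ψ}

theorem classTable_propClass (A : Set (LTLf P)) (χ : LTLf P) :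
    classTable A (propClass χ) = truthTable A χ :=
  Set.ext fun _ => ⟨fun ⟨hs, h⟩ => ⟨hs, h χ fun _ => .rfl⟩,
    fun ⟨hs, h⟩ => ⟨hs, fun _ hψ => (hψ _).mp h⟩⟩

theorem injOn_classTable (A : Set (LTLf P)) : Set.InjOn (classTable A) (propClassesOn A) := by
  rintro _ ⟨χ, hχ, rfl⟩ _ ⟨ψ, hψ, rfl⟩ h
  rw [classTable_propClass, classTable_propClass] at h
  exact propClass_eq_of_propEquiv (propEquiv_of_truthTable_eq hχ hψ h)

theorem mapsTo_classTable (A : Set (LTLf P)) :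
    Set.MapsTo (classTable A) (propClassesOn A) (𝒫 𝒫 A) :=
  fun _ _ => Set.sep_subset _ _

theorem propClassesOn_finite {A : Set (LTLf P)} (hA : A.Finite) : (propClassesOn A).Finite :=
  .of_injOn (mapsTo_classTable A) (injOn_classTable A) hA.powerset.powerset

theorem ncard_propClassesOn_le {A : Set (LTLf P)} (hA : A.Finite) :
    (propClassesOn A).ncard ≤ 2 ^ 2 ^ A.ncard :=
  calc (propClassesOn A).ncard
    _ ≤ (𝒫 𝒫 A).ncard :=
      Set.ncard_le_ncard_of_injOn _ (mapsTo_classTable A) (injOn_classTable A) hA.powerset.powerset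
    _ = 2 ^ 2 ^ A.ncard := by rw [Set.ncard_powerset _ hA.powerset, Set.ncard_powerset _ hA]

/-- the states reachable from `φ` by repeated progression, identified
up to propositional equivalence, number at most `2 ^ 2 ^ |cl(φ)|`. -/
theorem reachable_doubly_exponential (φ : LTLf P) :
    ({C : Set (LTLf P) | ∃ u : List (Set P), C = {ψ | PropEquiv (fpTrace φ u) ψ}}).Finite ∧
    ({C : Set (LTLf P) | ∃ u : List (Set P), C = {ψ | PropEquiv (fpTrace φ u) ψ}}).ncard ≤
      2 ^ 2 ^ (cl φ).ncard := by
  have hreach : {C : Set (LTLf P) | ∃ u : List (Set P), C = {ψ | PropEquiv (fpTrace φ u) ψ}} ⊆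
      propClassesOn (cl φ) :=
    fun _ ⟨u, hC⟩ => ⟨_, atoms_fpTrace_subset_cl φ u, hC⟩
  have hfin := propClassesOn_finite (cl_finite φ)
  exact ⟨hfin.subset hreach,
    (Set.ncard_le_ncard hreach hfin).trans (ncard_propClassesOn_le (cl_finite φ))⟩

end LTLfSynth
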